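/- With the Sum criterion and α = 1, the column sums of tile norms are non-increasing: if ‖(A_{k,k}^(k))⁻¹‖₁⁻¹ ≥ Σ_{i>k} ‖A_{i,k}^(k)‖₁, then Σ_{i>k} ‖A_{i,j}^(k+1)‖₁ ≤ Σ_{i≥k} ‖A_{i,j}^(k)‖₁ for every j > k. -/

import Mathlib

/-!
Each updated tile satisfies `‖A_ij - A_ik B A_kj‖₁ ≤ ‖A_ij‖₁ + ‖A_ik‖₁ ‖B‖₁ ‖A_kj‖₁` with
`B = A_kk⁻¹`, by the triangle inequality and submultiplicativity of the 1-norm. Summing over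
`i > k`, the Sum criterion bounds `(Σ_{i>k} ‖A_ik‖₁) ‖B‖₁` by `1`, so the extra terms add up to
at most `‖A_kj‖₁`, which is exactly the `i = k` term of the right-hand side.
-/

/-- The induced matrix 1-norm (maximum absolute column sum). -/
noncomputable def norm1 {ι κ : Type*} [Fintype ι] [Fintype κ] (M : Matrix ι κ ℝ) : ℝ :=
  ⨆ j, ∑ i, |M i j|

section Norm1

open Matrix

variable {l m p : Type*} [Fintype l] [Fintype m] [Fintype p]

attribute [local instance] Matrix.linftyOpNormedAddCommGroup

theorem norm1_eq_linfty_opNorm_transpose (M : Matrix m p ℝ) : norm1 M = ‖Mᵀ‖ := by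
  rw [linfty_opNorm_def, norm1, Finset.sup_univ_eq_ciSup, NNReal.coe_iSup]
  simp [Real.norm_eq_abs]

theorem norm1_nonneg (M : Matrix m p ℝ) : 0 ≤ norm1 M := by
  rw [norm1_eq_linfty_opNorm_transpose]
  exact norm_nonneg _

theorem norm1_sub_le (M N : Matrix m p ℝ) : norm1 (M - N) ≤ norm1 M + norm1 N := by
  simp only [norm1_eq_linfty_opNorm_transpose, transpose_sub]
  exact norm_sub_le _ _

theorem norm1_mul_le (M : Matrix l m ℝ) (N : Matrix m p ℝ) :
    norm1 (M * N) ≤ norm1 M * norm1 N := by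
  simp only [norm1_eq_linfty_opNorm_transpose, transpose_mul]
  rw [mul_comm]
  exact linfty_opNorm_mul _ _

end Norm1

section SchurUpdate

variable {ι m p q r : Type*} [Fintype m] [Fintype p] [Fintype q] [Fintype r]

theorem norm1_sub_mul_mul_le (X : Matrix m p ℝ) (Y : Matrix m q ℝ) (B : Matrix q r ℝ)
    (Z : Matrix r p ℝ) :
    norm1 (X - Y * B * Z) ≤ norm1 X + norm1 Y * (norm1 B * norm1 Z) := by
  have hYBZ : norm1 (Y * B * Z) ≤ norm1 Y * (norm1 B * norm1 Z) :=
    calc norm1 (Y * B * Z) ≤ norm1 (Y * B) * norm1 Z := norm1_mul_le _ _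
      _ ≤ norm1 Y * norm1 B * norm1 Z :=
        mul_le_mul_of_nonneg_right (norm1_mul_le _ _) (norm1_nonneg _)
      _ = norm1 Y * (norm1 B * norm1 Z) := mul_assoc _ _ _
  linarith [norm1_sub_le X (Y * B * Z)]

theorem sum_norm1_sub_mul_mul_le (s : Finset ι) (X : ι → Matrix m p ℝ)
    (Y : ι → Matrix m q ℝ) (B : Matrix q r ℝ) (Z : Matrix r p ℝ)
    (hcrit : ∑ i ∈ s, norm1 (Y i) ≤ (norm1 B)⁻¹) :
    ∑ i ∈ s, norm1 (X i - Y i * B * Z) ≤ ∑ i ∈ s, norm1 (X i) + norm1 Z := by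
  have hYB : (∑ i ∈ s, norm1 (Y i)) * norm1 B ≤ 1 :=
    mul_le_of_le_mul_inv₀ zero_le_one (norm1_nonneg B) (by rwa [one_mul])
  calc ∑ i ∈ s, norm1 (X i - Y i * B * Z)
      ≤ ∑ i ∈ s, (norm1 (X i) + norm1 (Y i) * (norm1 B * norm1 Z)) :=
        Finset.sum_le_sum fun i _ => norm1_sub_mul_mul_le _ _ _ _
    _ = ∑ i ∈ s, norm1 (X i) + (∑ i ∈ s, norm1 (Y i)) * norm1 B * norm1 Z := by
        rw [Finset.sum_add_distrib, Finset.sum_mul, Finset.sum_mul]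
        simp only [mul_assoc]
    _ ≤ ∑ i ∈ s, norm1 (X i) + 1 * norm1 Z := by
        gcongr
        exact norm1_nonneg Z
    _ = ∑ i ∈ s, norm1 (X i) + norm1 Z := by rw [one_mul]

end SchurUpdate

theorem sum_criterion_alpha_one_nonincreasing_general
    {n nb : ℕ} (A : Fin n → Fin n → Matrix (Fin nb) (Fin nb) ℝ)
    (k : Fin n)
    (hcrit : ∑ i ∈ Finset.univ.filter (fun i => k < i), norm1 (A i k)
      ≤ (norm1 ((A k k)⁻¹))⁻¹) :
    ∀ j, k < j →
      ∑ i ∈ Finset.univ.filter (fun i => k < i),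
          norm1 (A i j - A i k * (A k k)⁻¹ * A k j)
        ≤ ∑ i ∈ Finset.univ.filter (fun i => k ≤ i), norm1 (A i j) := by
  intro j _
  rw [Finset.filter_lt_eq_Ioi] at hcrit ⊢
  rw [Finset.filter_le_eq_Ici, ← Finset.Ioi_insert, Finset.sum_insert Finset.notMem_Ioi_self,
    add_comm]
  exact sum_norm1_sub_mul_mul_le _ (fun i => A i j) (fun i => A i k) _ _ hcrit

/-- With the Sum criterion and `α = 1`, the column sums of tile norms are non-increasing
under the Schur update. -/
theorem sum_criterion_alpha_one_nonincreasing
    {n nb : ℕ} (A : Fin n → Fin n → Matrix (Fin nb) (Fin nb) ℝ)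
    (k : Fin n)
    (hinv : IsUnit (A k k))
    (hcrit : ∑ i ∈ Finset.univ.filter (fun i => k < i), norm1 (A i k)
      ≤ (norm1 ((A k k)⁻¹))⁻¹) :
    ∀ j, k < j →
      ∑ i ∈ Finset.univ.filter (fun i => k < i),
          norm1 (A i j - A i k * (A k k)⁻¹ * A k j)
        ≤ ∑ i ∈ Finset.univ.filter (fun i => k ≤ i), norm1 (A i j) :=
  sum_criterion_alpha_one_nonincreasing_general A k hcrit
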